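/- arXiv:1409.6873 — 2 statements merged into one kernel-verified Lean document; each statement's English description precedes it below -/
import Mathlib

section
/- For every focus f ∈ F and every closed service-family term t, either the equation t = ∂_{{f}}(t) is derivable from the SFA axioms, or there exists a service s ∈ Serv such that the equation t = f.s ⊕ ∂_{{f}}(t) is derivable from the SFA axioms. -/
namespace Stmt10

/-- Closed service family terms over a set `F` of foci and a set `Serv` of
services. -/
inductive SF (F Serv : Type) : Type
  | empty : SF F Serv
  | single : F → Serv → SF F Serv
  | comp : SF F Serv → SF F Serv → SF F Serv
  | encap : Set F → SF F Serv → SF F Serv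

/-- Derivable equality of closed service family terms from the SFA axioms
(with empty service `δ`): the smallest congruence containing all closed
instances of SFC1–SFC4 and SFE1–SFE4. -/
inductive SFEq {F Serv : Type} (δ : Serv) : SF F Serv → SF F Serv → Prop
  | refl (u : SF F Serv) : SFEq δ u u
  | symm {u v : SF F Serv} : SFEq δ u v → SFEq δ v u
  | trans {u v w : SF F Serv} : SFEq δ u v → SFEq δ v w → SFEq δ u w
  | comp_congr {u u' v v' : SF F Serv} :
      SFEq δ u u' → SFEq δ v v' → SFEq δ (.comp u v) (.comp u' v')
  | encap_congr (F' : Set F) {u u' : SF F Serv} :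
      SFEq δ u u' → SFEq δ (.encap F' u) (.encap F' u')
  | sfc1 (u : SF F Serv) : SFEq δ (.comp u .empty) u
  | sfc2 (u v : SF F Serv) : SFEq δ (.comp u v) (.comp v u)
  | sfc3 (u v w : SF F Serv) : SFEq δ (.comp (.comp u v) w) (.comp u (.comp v w))
  | sfc4 (f : F) (s s' : Serv) :
      SFEq δ (.comp (.single f s) (.single f s')) (.single f δ)
  | sfe1 (F' : Set F) : SFEq δ (.encap F' .empty) .empty
  | sfe2 (F' : Set F) (f : F) (s : Serv) (hf : f ∈ F') :
      SFEq δ (.encap F' (.single f s)) .empty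
  | sfe3 (F' : Set F) (f : F) (s : Serv) (hf : f ∉ F') :
      SFEq δ (.encap F' (.single f s)) (.single f s)
  | sfe4 (F' : Set F) (u v : SF F Serv) :
      SFEq δ (.encap F' (.comp u v)) (.comp (.encap F' u) (.encap F' v))

section Aux
variable {F Serv : Type} {δ : Serv}

lemma encap_union (A B : Set F) (u : SF F Serv) :
    SFEq δ (.encap A (.encap B u)) (.encap (A ∪ B) u) := by
  induction u generalizing A B with
  | empty =>
      exact .trans (.encap_congr A (.sfe1 B)) (.trans (.sfe1 A) (.symm (.sfe1 _)))
  | single g s =>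
      by_cases hB : g ∈ B
      · exact .trans (.encap_congr A (.sfe2 B g s hB))
          (.trans (.sfe1 A) (.symm (.sfe2 _ g s (Or.inr hB))))
      · by_cases hA : g ∈ A
        · exact .trans (.encap_congr A (.sfe3 B g s hB))
            (.trans (.sfe2 A g s hA) (.symm (.sfe2 _ g s (Or.inl hA))))
        · exact .trans (.encap_congr A (.sfe3 B g s hB))
            (.trans (.sfe3 A g s hA) (.symm (.sfe3 _ g s (by simp [hA, hB]))))
  | comp u v ihu ihv =>
      refine .trans (.encap_congr A (.sfe4 B u v)) (.trans (.sfe4 A _ _) ?_)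
      exact .trans (.comp_congr (ihu A B) (ihv A B)) (.symm (.sfe4 _ u v))
  | encap C v ih =>
      refine .trans (.encap_congr A (ih B C)) (.trans (ih A (B ∪ C)) ?_)
      rw [← Set.union_assoc]
      exact .symm (ih (A ∪ B) C)

lemma encap_comm (A B : Set F) (u : SF F Serv) :
    SFEq δ (.encap A (.encap B u)) (.encap B (.encap A u)) := by
  refine .trans (encap_union A B u) ?_
  rw [Set.union_comm]
  exact .symm (encap_union B A u)

lemma swapc (a b c : SF F Serv) :
    SFEq δ (.comp a (.comp b c)) (.comp b (.comp a c)) :=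
  .trans (.symm (.sfc3 a b c)) (.trans (.comp_congr (.sfc2 a b) (.refl c)) (.sfc3 b a c))

lemma midc (a b c d : SF F Serv) :
    SFEq δ (.comp (.comp a b) (.comp c d)) (.comp (.comp a c) (.comp b d)) := by
  refine .trans (.sfc3 a b (.comp c d)) (.trans (.comp_congr (.refl a) (swapc b c d)) ?_)
  exact .symm (.sfc3 a c (.comp b d))

end Aux

/-- For every focus `f` and closed service family term `t`, either
`t = ∂_{{f}}(t)` is derivable from the SFA axioms, or there is a service `s`
such that `t = f.s ⊕ ∂_{{f}}(t)` is derivable from the SFA axioms. -/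
theorem sfa_focus_decomposition {F Serv : Type} (δ : Serv) (f : F)
    (t : SF F Serv) :
    SFEq δ t (.encap {f} t) ∨
      ∃ s : Serv, SFEq δ t (.comp (.single f s) (.encap {f} t)) := by
  induction t with
  | empty => exact Or.inl (.symm (.sfe1 _))
  | single g s =>
      by_cases hg : g = f
      · subst hg
        refine Or.inr ⟨s, ?_⟩
        refine .symm (.trans (.comp_congr (.refl _) (.sfe2 _ g s rfl)) (.sfc1 _))
      · exact Or.inl (.symm (.sfe3 _ g s (by simp [hg])))
  | comp u v ihu ihv =>
      rcases ihu with hu | ⟨s, hu⟩ <;> rcases ihv with hv | ⟨s', hv⟩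
      · exact Or.inl (.trans (.comp_congr hu hv) (.symm (.sfe4 _ u v)))
      · refine Or.inr ⟨s', ?_⟩
        refine .trans (.comp_congr hu hv) (.trans (swapc _ _ _) ?_)
        exact .comp_congr (.refl _) (.symm (.sfe4 _ u v))
      · refine Or.inr ⟨s, ?_⟩
        refine .trans (.comp_congr hu hv) (.trans (.sfc3 _ _ _) ?_)
        exact .comp_congr (.refl _) (.symm (.sfe4 _ u v))
      · refine Or.inr ⟨δ, ?_⟩
        refine .trans (.comp_congr hu hv) (.trans (midc _ _ _ _) ?_)
        exact .comp_congr (.sfc4 f s s') (.symm (.sfe4 _ u v))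
  | encap A u ih =>
      by_cases hf : f ∈ A
      · left
        refine .symm (.trans (encap_union {f} A u) ?_)
        rw [show ({f} : Set F) ∪ A = A by simp [Set.union_eq_self_of_subset_left, hf,
          Set.singleton_subset_iff]]
        exact .refl _
      · rcases ih with hu | ⟨s, hu⟩
        · left
          exact .trans (.encap_congr A hu) (encap_comm A {f} u)
        · right
          refine ⟨s, ?_⟩
          refine .trans (.encap_congr A hu) (.trans (.sfe4 A _ _) ?_)
          exact .comp_congr (.sfe3 A f s hf) (encap_comm A {f} u)

end Stmt10
end

section
/- Let R be a commutative ring with multiplicative identity 1 ≠ 0, equipped with a total unary operation x ↦ x⁻¹ satisfying (x⁻¹)⁻¹ = x and x · (x · x⁻¹) = x for all x ∈ R, and satisfying the cancellation axiom: for all x, y, z ∈ R, if x ≠ 0 and x · y = x · z then y = z. Then for every x ∈ R with x ≠ 0 one has x · x⁻¹ = 1; in particular R is a field whose inverse operation is total with 0⁻¹ = 0 (a zero-totalized field). -/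
/-- A cancellation meadow satisfying the separation axiom `0 ≠ 1` is a
zero-totalized field: every nonzero `x` satisfies `x · x⁻¹ = 1`, the inverse of
zero is zero, and the underlying ring is a field. -/
theorem cancellation_meadow_is_zero_totalized_field {R : Type*} [CommRing R]
    (hsep : (0 : R) ≠ 1) (inv : R → R)
    (h1 : ∀ x : R, inv (inv x) = x)
    (h2 : ∀ x : R, x * (x * inv x) = x)
    (hcancel : ∀ x y z : R, x ≠ 0 → x * y = x * z → y = z) :
    (∀ x : R, x ≠ 0 → x * inv x = 1) ∧ inv 0 = 0 ∧ IsField R := by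
  have key : ∀ x : R, x ≠ 0 → x * inv x = 1 := by
    intro x hx
    apply hcancel x _ _ hx
    rw [mul_one]
    exact h2 x
  refine ⟨key, ?_, ?_⟩
  · have := h2 (inv 0)
    rw [h1, mul_zero, mul_zero] at this
    exact this.symm
  · exact ⟨⟨0, 1, hsep⟩, mul_comm, fun {a} ha => ⟨inv a, key a ha⟩⟩
end
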